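/- Let G = (V, E, w) be a weighted hypergraph with positive degrees, let λ > 0 and x' ∈ ℝ^V. A vector x ∈ ℝ^V satisfies x − x' ∈ −λ 𝓛_G(x) if and only if z := D⁻¹x is the unique minimizer over ℝ^V of the strictly convex function F(z) = (λ/2) ∑_{e ∈ E} w(e) f_e(z)² + (1/2) ∑_{v ∈ V} (z(v) − (D⁻¹x')(v))² d(v), where f_e(z) = max_{u ∈ e} z(u) − min_{u ∈ e} z(u). In particular, for every x' the equation x − x' ∈ −λ 𝓛_G(x) has exactly one solution x. -/

import Mathlib

open Finset
open scoped Classical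

structure WHG (V : Type) [Fintype V] [DecidableEq V] where
  E : Type
  [fintypeE : Fintype E]
  mem : E → Finset V
  mem_nonempty : ∀ e, (mem e).Nonempty
  w : E → ℝ
  w_pos : ∀ e, 0 < w e

namespace WHG

attribute [instance] WHG.fintypeE

variable {V : Type} [Fintype V] [DecidableEq V] (G : WHG V)

/-- Degree of a vertex. -/
noncomputable def deg (v : V) : ℝ := ∑ e : G.E, if v ∈ G.mem e then G.w e else 0

/-- Volume of a vertex set. -/
noncomputable def vol (S : Finset V) : ℝ := ∑ v ∈ S, G.deg v

/-- Euclidean dot product. -/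
def dot (x y : V → ℝ) : ℝ := ∑ v, x v * y v

/-- Inner product weighted by `D⁻¹`. -/
noncomputable def innerD (x y : V → ℝ) : ℝ := ∑ v, x v * y v / G.deg v

/-- Norm associated to `innerD`. -/
noncomputable def normD (x : V → ℝ) : ℝ := Real.sqrt (G.innerD x x)

/-- `D⁻¹ x`. -/
noncomputable def Dinv (x : V → ℝ) : V → ℝ := fun v => x v / G.deg v

/-- Base polytope `B_e`. -/
def base (e : G.E) : Set (V → ℝ) :=
  convexHull ℝ {b : V → ℝ | ∃ u ∈ G.mem e, ∃ v ∈ G.mem e, b = Pi.single u 1 - Pi.single v 1}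

/-- Multi-valued hypergraph Laplacian `L_G`. -/
def Lap (x : V → ℝ) : Set (V → ℝ) :=
  {y | ∃ b : G.E → V → ℝ,
    (∀ e, b e ∈ G.base e ∧ ∀ b' ∈ G.base e, dot b' x ≤ dot (b e) x) ∧
    y = ∑ e : G.E, (G.w e * dot (b e) x) • b e}

/-- Normalized Laplacian `𝓛_G`. -/
noncomputable def nLap (x : V → ℝ) : Set (V → ℝ) := G.Lap (G.Dinv x)

/-- Total weight of hyperedges crossing `S`. -/
noncomputable def cut (S : Finset V) : ℝ :=
  ∑ e : G.E, if (G.mem e ∩ S).Nonempty ∧ (G.mem e \ S).Nonempty then G.w e else 0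

/-- Conductance of a vertex set. -/
noncomputable def cond (S : Finset V) : ℝ := G.cut S / min (G.vol S) (G.vol Sᶜ)

/-- Conductance of the hypergraph. -/
noncomputable def condG : ℝ :=
  sInf {c | ∃ S : Finset V, S.Nonempty ∧ S ≠ Finset.univ ∧ c = G.cond S}

/-- Connectivity of a hypergraph. -/
def Connected : Prop :=
  ∀ S : Finset V, S.Nonempty → S ≠ Finset.univ →
    ∃ e : G.E, (G.mem e ∩ S).Nonempty ∧ (G.mem e \ S).Nonempty

/-- The stationary vector `π`. -/
noncomputable def piVec : V → ℝ := fun v => G.deg v / G.vol Finset.univ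

/-- Solution of the heat equation `(HE; s)`. -/
def IsHeatSol (s : V → ℝ) (ρ : ℝ → V → ℝ) : Prop :=
  (∃ K : NNReal, LipschitzOnWith K ρ (Set.Ici 0)) ∧ ρ 0 = s ∧
  (∀ᵐ t : ℝ ∂MeasureTheory.volume, 0 ≤ t → ∃ y ∈ G.nLap (ρ t), HasDerivAt ρ (-y) t)

/-- Sweep sets of a vector. -/
def sweep (x : V → ℝ) : Set (Finset V) :=
  {S | ∃ τ : ℝ, S = Finset.univ.filter (fun v => τ ≤ x v) ∨
                S = Finset.univ.filter (fun v => x v ≤ τ)}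

/-- `κ_{T,t}`: the least conductance of nontrivial sweep sets of `ρ_ξ`, `ξ ∈ [T,t]`. -/
noncomputable def kappa (ρ : ℝ → V → ℝ) (T t : ℝ) : ℝ :=
  sInf {c | ∃ ξ ∈ Set.Icc T t, ∃ S ∈ sweep (ρ ξ),
    S.Nonempty ∧ S ≠ Finset.univ ∧ c = G.cond S}

/-- The family `𝒢(G, x)` of collapsed weighted graphs. -/
def GraphFamily (x : V → ℝ) (A : Matrix V V ℝ) : Prop :=
  A.IsSymm ∧ (∀ u v, 0 ≤ A u v) ∧ (∀ v, ∑ u, A v u = G.deg v) ∧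
  ∃ w' : G.E → V → V → ℝ,
    (∀ e u v, 0 ≤ w' e u v) ∧
    (∀ e u v, w' e u v ≠ 0 →
      (u ∈ G.mem e ∧ ∀ u' ∈ G.mem e, x u' ≤ x u) ∧
      (v ∈ G.mem e ∧ ∀ v' ∈ G.mem e, x v ≤ x v')) ∧
    (∀ e, ∑ u : V, ∑ v : V, w' e u v = G.w e) ∧
    (∀ u v, u ≠ v → A u v = ∑ e : G.E, (w' e u v + w' e v u))

/-!
In the variable `z = D⁻¹x` the resolvent equation reads `D(z - D⁻¹x') + λy = 0` with
`y ∈ L_G(z)`. The members of `L_G(z)` are the sums `∑_e w(e) f_e(z) b_e` with `b_e` in the face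
of `B_e` on which `bᵀz` attains its maximum `f_e(z)`, and `2 f_e(z) b_e` is then a subgradient of
`f_e²` at `z` because `|bᵀz₂| ≤ f_e(z₂)` on `B_e`. Hence a solution satisfies
`F(z₂) ≥ F(z) + ½ ∑_v (z₂(v) - z(v))² d(v)`, so `z` is the unique minimizer.
Conversely `F` is continuous and coercive, so it has a minimizer `z`, and `0` lies in the compact
convex set `D(z - D⁻¹x') + λ ∑_e w(e) f_e(z) • face_e(z)`: otherwise a separating direction `h`
would be a descent direction, by the one-sided bound
`f_e(z + t h) ≤ f_e(z) + t (max h - min h)` over the maximizing and minimizing vertices of `z`.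
-/

end WHG

open Filter Topology
open scoped Matrix

lemma eventually_add_mul_le_add_mul {p q M a : ℝ} (hp : p ≤ M) (hq : p = M → q ≤ a) :
    ∀ᶠ t in 𝓝[≥] (0 : ℝ), p + t * q ≤ M + t * a := by
  rcases hp.eq_or_lt with rfl | hlt
  · filter_upwards [self_mem_nhdsWithin] with t (ht : 0 ≤ t)
    exact add_le_add_right (mul_le_mul_of_nonneg_left (hq rfl) ht) p
  · refine eventually_nhdsWithin_of_eventually_nhds ?_
    have hl : ContinuousAt (fun t : ℝ => p + t * q) 0 := by fun_prop
    have hr : ContinuousAt (fun t : ℝ => M + t * a) 0 := by fun_prop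
    exact (hl.eventually_lt hr (by simpa using hlt)).mono fun _ => le_of_lt

lemma eventually_mul_add_sq_mul_neg {D C : ℝ} (hD : D < 0) :
    ∀ᶠ t in 𝓝[>] (0 : ℝ), t * D + t ^ 2 * C < 0 := by
  have hcont : ContinuousAt (fun t : ℝ => D + t * C) 0 := by fun_prop
  filter_upwards [self_mem_nhdsWithin,
    nhdsWithin_le_nhds (hcont.eventually_lt continuousAt_const (by simpa using hD))]
    with t (ht : 0 < t) hDC
  have := mul_neg_of_pos_of_neg ht hDC
  linarith

namespace Finset

lemma exists_mem_eq_sup'_forall_le {ι : Type*} (s : Finset ι) (hs : s.Nonempty) (z h : ι → ℝ) :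
    ∃ i ∈ s, z i = s.sup' hs z ∧ ∀ j ∈ s, z j = s.sup' hs z → h j ≤ h i := by
  obtain ⟨i₀, hi₀, hzi₀⟩ := exists_mem_eq_sup' hs z
  obtain ⟨i, hi, hmax⟩ := (s.filter (z · = s.sup' hs z)).exists_max_image h
    ⟨i₀, mem_filter.2 ⟨hi₀, hzi₀.symm⟩⟩
  exact ⟨i, (mem_filter.1 hi).1, (mem_filter.1 hi).2,
    fun j hj hzj => hmax j (mem_filter.2 ⟨hj, hzj⟩)⟩

lemma exists_mem_eq_inf'_forall_le {ι : Type*} (s : Finset ι) (hs : s.Nonempty) (z h : ι → ℝ) :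
    ∃ i ∈ s, z i = s.inf' hs z ∧ ∀ j ∈ s, z j = s.inf' hs z → h i ≤ h j := by
  obtain ⟨i₀, hi₀, hzi₀⟩ := exists_mem_eq_inf' hs z
  obtain ⟨i, hi, hmin⟩ := (s.filter (z · = s.inf' hs z)).exists_min_image h
    ⟨i₀, mem_filter.2 ⟨hi₀, hzi₀.symm⟩⟩
  exact ⟨i, (mem_filter.1 hi).1, (mem_filter.1 hi).2,
    fun j hj hzj => hmin j (mem_filter.2 ⟨hj, hzj⟩)⟩

variable {ι : Type*} (s : Finset ι) (hs : s.Nonempty) {z h : ι → ℝ} {a : ℝ}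

lemma eventually_sup'_add_smul_le (ha : ∀ i ∈ s, z i = s.sup' hs z → h i ≤ a) :
    ∀ᶠ t in 𝓝[≥] (0 : ℝ), s.sup' hs (z + t • h) ≤ s.sup' hs z + t * a := by
  filter_upwards [(eventually_all_finset s).2 fun i hi =>
    eventually_add_mul_le_add_mul (le_sup' z hi) (ha i hi)] with t ht
  exact sup'_le _ _ ht

lemma eventually_le_inf'_add_smul (ha : ∀ i ∈ s, z i = s.inf' hs z → a ≤ h i) :
    ∀ᶠ t in 𝓝[≥] (0 : ℝ), s.inf' hs z + t * a ≤ s.inf' hs (z + t • h) := by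
  filter_upwards [(eventually_all_finset s).2 fun i hi =>
    eventually_add_mul_le_add_mul (neg_le_neg (inf'_le z hi))
      fun hzi => neg_le_neg (ha i hi (neg_inj.1 hzi))] with t ht
  refine le_inf' _ _ fun i hi => ?_
  simp only [Pi.add_apply, Pi.smul_apply, smul_eq_mul]
  linarith [ht i hi]

end Finset

lemma exists_forall_dotProduct_neg {ι : Type*} [Fintype ι] {K : Set (ι → ℝ)}
    (hK : Convex ℝ K) (hKc : IsClosed K) (h0 : (0 : ι → ℝ) ∉ K) :
    ∃ h : ι → ℝ, ∀ k ∈ K, k ⬝ᵥ h < 0 := by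
  obtain ⟨f, u, hfu, hu⟩ := geometric_hahn_banach_point_closed hK hKc h0
  refine ⟨fun i => -f fun j => if i = j then 1 else 0, fun k hk => ?_⟩
  have hf := f.toLinearMap.pi_apply_eq_sum_univ k
  simp only [ContinuousLinearMap.coe_coe, smul_eq_mul] at hf
  simp only [dotProduct, mul_neg, sum_neg_distrib, ← hf]
  linarith [hu k hk, map_zero f]

namespace WHG

variable {V : Type} [Fintype V]

lemma dot_eq_dotProduct (x y : V → ℝ) : dot x y = x ⬝ᵥ y := rfl

lemma continuous_dot_left (z : V → ℝ) : Continuous fun b : V → ℝ => dot b z :=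
  continuous_finsetSum _ fun v _ => (continuous_apply v).mul continuous_const

lemma isLinearMap_dot_left (z : V → ℝ) : IsLinearMap ℝ fun b : V → ℝ => dot b z :=
  ⟨fun a b => add_dotProduct a b z, fun c b => smul_dotProduct c b z⟩

variable [DecidableEq V] (G : WHG V)

lemma dot_single_sub_single (u v : V) (z : V → ℝ) :
    dot (Pi.single u 1 - Pi.single v 1) z = z u - z v := by
  simp only [dot_eq_dotProduct, sub_dotProduct, single_dotProduct, one_mul]

/-- The paper's `f_e(z)`. -/
noncomputable def spread (e : G.E) (z : V → ℝ) : ℝ :=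
  (G.mem e).sup' (G.mem_nonempty e) z - (G.mem e).inf' (G.mem_nonempty e) z

lemma spread_nonneg (e : G.E) (z : V → ℝ) : 0 ≤ G.spread e z := by
  obtain ⟨u, hu⟩ := G.mem_nonempty e
  exact sub_nonneg.2 ((inf'_le z hu).trans (le_sup' z hu))

lemma continuous_spread (e : G.E) : Continuous (G.spread e) :=
  (Continuous.finset_sup'_apply _ fun u _ => continuous_apply u).sub
    (Continuous.finset_inf'_apply _ fun u _ => continuous_apply u)

lemma eventually_spread_add_smul_le {e : G.E} {z h : V → ℝ} {α β : ℝ}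
    (hα : ∀ u ∈ G.mem e, z u = (G.mem e).sup' (G.mem_nonempty e) z → h u ≤ α)
    (hβ : ∀ u ∈ G.mem e, z u = (G.mem e).inf' (G.mem_nonempty e) z → β ≤ h u) :
    ∀ᶠ t in 𝓝[≥] (0 : ℝ), G.spread e (z + t • h) ≤ G.spread e z + t * (α - β) := by
  filter_upwards [(G.mem e).eventually_sup'_add_smul_le (G.mem_nonempty e) hα,
    (G.mem e).eventually_le_inf'_add_smul (G.mem_nonempty e) hβ] with t hsup hinf
  simp only [spread]
  linarith

lemma single_sub_mem_base (e : G.E) {u v : V} (hu : u ∈ G.mem e) (hv : v ∈ G.mem e) :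
    Pi.single u 1 - Pi.single v 1 ∈ G.base e :=
  subset_convexHull ℝ _ ⟨u, hu, v, hv, rfl⟩

lemma isCompact_base (e : G.E) : IsCompact (G.base e) := by
  have hfin : {b : V → ℝ |
      ∃ u ∈ G.mem e, ∃ v ∈ G.mem e, b = Pi.single u 1 - Pi.single v 1}.Finite := by
    refine ((G.mem e).finite_toSet.image2 (fun u v => Pi.single u 1 - Pi.single v 1)
      (G.mem e).finite_toSet).subset ?_
    rintro _ ⟨u, hu, v, hv, rfl⟩
    exact ⟨u, hu, v, hv, rfl⟩
  exact hfin.isCompact_convexHull (𝕜 := ℝ)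

lemma abs_dot_le_spread {e : G.E} {b : V → ℝ} (hb : b ∈ G.base e) (z : V → ℝ) :
    |dot b z| ≤ G.spread e z := by
  have hconv : Convex ℝ ({b | -G.spread e z ≤ dot b z} ∩ {b | dot b z ≤ G.spread e z}) :=
    (convex_halfSpace_ge (isLinearMap_dot_left z) _).inter
      (convex_halfSpace_le (isLinearMap_dot_left z) _)
  refine abs_le.2 (convexHull_min ?_ hconv hb)
  rintro _ ⟨u, hu, v, hv, rfl⟩
  have := dot_single_sub_single u v z
  constructor <;> simp only [Set.mem_ofPred, this, spread] <;>
    linarith [le_sup' z hu, le_sup' z hv, inf'_le z hu, inf'_le z hv]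

def face (e : G.E) (z : V → ℝ) : Set (V → ℝ) := {b ∈ G.base e | dot b z = G.spread e z}

lemma convex_face (e : G.E) (z : V → ℝ) : Convex ℝ (G.face e z) := by
  refine (convex_convexHull ℝ _).inter ?_
  exact convex_hyperplane (isLinearMap_dot_left z) _

lemma isCompact_face (e : G.E) (z : V → ℝ) : IsCompact (G.face e z) :=
  (G.isCompact_base e).inter_right (isClosed_eq (continuous_dot_left z) continuous_const)

lemma single_sub_mem_face {e : G.E} {z : V → ℝ} {u v : V} (hu : u ∈ G.mem e)
    (hzu : z u = (G.mem e).sup' (G.mem_nonempty e) z) (hv : v ∈ G.mem e)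
    (hzv : z v = (G.mem e).inf' (G.mem_nonempty e) z) :
    Pi.single u 1 - Pi.single v 1 ∈ G.face e z := by
  refine ⟨G.single_sub_mem_base e hu hv, ?_⟩
  rw [dot_single_sub_single, spread, hzu, hzv]

lemma forall_dot_le_iff_mem_face {e : G.E} {z b : V → ℝ} (hb : b ∈ G.base e) :
    (∀ b' ∈ G.base e, dot b' z ≤ dot b z) ↔ b ∈ G.face e z := by
  refine ⟨fun hmax => ⟨hb, le_antisymm (le_of_abs_le (G.abs_dot_le_spread hb z)) ?_⟩,
    fun hface b' hb' => hface.2 ▸ le_of_abs_le (G.abs_dot_le_spread hb' z)⟩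
  obtain ⟨u, hu, hzu⟩ := exists_mem_eq_sup' (G.mem_nonempty e) z
  obtain ⟨v, hv, hzv⟩ := exists_mem_eq_inf' (G.mem_nonempty e) z
  exact (G.single_sub_mem_face hu hzu.symm hv hzv.symm).2 ▸ hmax _ (G.single_sub_mem_base e hu hv)

lemma mem_Lap_iff {z y : V → ℝ} :
    y ∈ G.Lap z ↔
      ∃ b : G.E → V → ℝ, (∀ e, b e ∈ G.face e z) ∧ y = ∑ e, (G.w e * G.spread e z) • b e := by
  constructor
  · rintro ⟨b, hb, rfl⟩
    have hface e : b e ∈ G.face e z := (G.forall_dot_le_iff_mem_face (hb e).1).1 (hb e).2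
    exact ⟨b, hface, sum_congr rfl fun e _ => by rw [(hface e).2]⟩
  · rintro ⟨b, hb, rfl⟩
    refine ⟨b, fun e => ⟨(hb e).1, (G.forall_dot_le_iff_mem_face (hb e).1).2 (hb e)⟩,
      sum_congr rfl fun e _ => by rw [(hb e).2]⟩

noncomputable def edgeEnergy (z : V → ℝ) : ℝ := ∑ e, G.w e * G.spread e z ^ 2

/-- The objective `F` with `D⁻¹x'` replaced by an arbitrary centre `z'`. -/
noncomputable def energy (lam : ℝ) (z' z : V → ℝ) : ℝ :=
  lam / 2 * G.edgeEnergy z + 1 / 2 * ∑ v, (z v - z' v) ^ 2 * G.deg v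

/-- The resolvent equation `x - x' ∈ -λ 𝓛_G(x)` written in `z = D⁻¹x`, `z' = D⁻¹x'`. -/
def SolvesResolvent (lam : ℝ) (z' z : V → ℝ) : Prop :=
  ∃ y ∈ G.Lap z, ∀ v, (z v - z' v) * G.deg v + lam * y v = 0

lemma edgeEnergy_nonneg (z : V → ℝ) : 0 ≤ G.edgeEnergy z :=
  sum_nonneg fun e _ => mul_nonneg (G.w_pos e).le (sq_nonneg _)

lemma continuous_energy (lam : ℝ) (z' : V → ℝ) : Continuous (G.energy lam z') := by
  unfold energy edgeEnergy
  have := G.continuous_spread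
  fun_prop

lemma sq_spread_add_two_mul_le {e : G.E} {z b : V → ℝ} (hb : b ∈ G.face e z) (z₂ : V → ℝ) :
    G.spread e z ^ 2 + 2 * G.spread e z * dot b (z₂ - z) ≤ G.spread e z₂ ^ 2 := by
  have hbound := G.abs_dot_le_spread hb.1 z₂
  have hsplit : dot b (z₂ - z) = dot b z₂ - G.spread e z := by
    rw [dot_eq_dotProduct, dotProduct_sub, ← dot_eq_dotProduct, ← dot_eq_dotProduct, hb.2]
  rw [hsplit]
  nlinarith [sq_abs (dot b z₂), abs_nonneg (dot b z₂), sq_nonneg (dot b z₂ - G.spread e z)]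

lemma edgeEnergy_add_two_dot_le {z y : V → ℝ} (hy : y ∈ G.Lap z) (z₂ : V → ℝ) :
    G.edgeEnergy z + 2 * dot y (z₂ - z) ≤ G.edgeEnergy z₂ := by
  obtain ⟨b, hb, rfl⟩ := (G.mem_Lap_iff).1 hy
  simp only [edgeEnergy, dot_eq_dotProduct, sum_dotProduct, smul_dotProduct, smul_eq_mul,
    mul_sum, ← sum_add_distrib]
  refine sum_le_sum fun e _ => ?_
  have := mul_le_mul_of_nonneg_left (G.sq_spread_add_two_mul_le (hb e) z₂) (G.w_pos e).le
  rw [dot_eq_dotProduct] at this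
  linarith

lemma energy_add_le_of_solvesResolvent {lam : ℝ} (hlam : 0 ≤ lam) {z' z : V → ℝ}
    (hz : G.SolvesResolvent lam z' z) (z₂ : V → ℝ) :
    G.energy lam z' z + 1 / 2 * ∑ v, (z₂ v - z v) ^ 2 * G.deg v ≤ G.energy lam z' z₂ := by
  obtain ⟨y, hy, hyz⟩ := hz
  have hedge := mul_le_mul_of_nonneg_left (G.edgeEnergy_add_two_dot_le hy z₂) hlam
  have hquad : ∑ v, (z₂ v - z' v) ^ 2 * G.deg v = ∑ v, (z v - z' v) ^ 2 * G.deg v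
      + ∑ v, (z₂ v - z v) ^ 2 * G.deg v - 2 * lam * dot y (z₂ - z) := by
    simp only [dot, Pi.sub_apply, mul_sum, ← sum_add_distrib, ← sum_sub_distrib]
    refine sum_congr rfl fun v _ => ?_
    linear_combination (2 * (z₂ v - z v)) * hyz v
  unfold energy
  linarith

lemma eventually_energy_add_smul_le {lam : ℝ} (hlam : 0 ≤ lam) (z' z h : V → ℝ) {α β : G.E → ℝ}
    (hα : ∀ e, ∀ u ∈ G.mem e, z u = (G.mem e).sup' (G.mem_nonempty e) z → h u ≤ α e)
    (hβ : ∀ e, ∀ u ∈ G.mem e, z u = (G.mem e).inf' (G.mem_nonempty e) z → β e ≤ h u) :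
    ∀ᶠ t in 𝓝[≥] (0 : ℝ), G.energy lam z' (z + t • h) ≤ G.energy lam z' z
      + t * (∑ v, (z v - z' v) * G.deg v * h v + lam * ∑ e, G.w e * G.spread e z * (α e - β e))
      + t ^ 2 * (lam / 2 * ∑ e, G.w e * (α e - β e) ^ 2 + 1 / 2 * ∑ v, h v ^ 2 * G.deg v) := by
  filter_upwards [eventually_all.2 fun e => G.eventually_spread_add_smul_le (hα e) (hβ e),
    self_mem_nhdsWithin] with t hspread (ht : 0 ≤ t)
  have hedge : G.edgeEnergy (z + t • h) ≤ G.edgeEnergy z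
      + 2 * t * ∑ e, G.w e * G.spread e z * (α e - β e) + t ^ 2 * ∑ e, G.w e * (α e - β e) ^ 2 := by
    simp only [edgeEnergy, mul_sum, ← sum_add_distrib]
    refine sum_le_sum fun e _ => ?_
    have hsq := pow_le_pow_left₀ (G.spread_nonneg e _) (hspread e) 2
    nlinarith [(G.w_pos e).le]
  have hquad : ∑ v, ((z + t • h) v - z' v) ^ 2 * G.deg v = ∑ v, (z v - z' v) ^ 2 * G.deg v
      + 2 * t * ∑ v, (z v - z' v) * G.deg v * h v + t ^ 2 * ∑ v, h v ^ 2 * G.deg v := by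
    simp only [Pi.add_apply, Pi.smul_apply, smul_eq_mul, mul_sum, ← sum_add_distrib]
    exact sum_congr rfl fun v _ => by ring
  have := mul_le_mul_of_nonneg_left hedge (by linarith : 0 ≤ lam / 2)
  unfold energy
  rw [hquad]
  linarith

/-- If `0 ∉ D(z - z') + λ ∑_e w(e) f_e(z) • face_e(z)`, a direction `h` separating `0` from this
compact convex set makes `t ↦ F(z + t h)` decrease for small `t > 0`. -/
lemma solvesResolvent_of_forall_energy_le {lam : ℝ} (hlam : 0 ≤ lam) {z' z : V → ℝ}
    (hmin : ∀ z₂, G.energy lam z' z ≤ G.energy lam z' z₂) : G.SolvesResolvent lam z' z := by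
  set c : V → ℝ := fun v => (z v - z' v) * G.deg v
  let L : (G.E → V → ℝ) →ₗ[ℝ] V → ℝ := ∑ e, (lam * (G.w e * G.spread e z)) • LinearMap.proj e
  have hL (b : G.E → V → ℝ) : L b = lam • ∑ e, (G.w e * G.spread e z) • b e := by
    simp only [L, LinearMap.sum_apply, LinearMap.smul_apply, LinearMap.proj_apply, smul_sum,
      smul_smul]
  set K := (fun b => c + L b) '' Set.univ.pi fun e => G.face e z
  by_contra hnot
  have h0 : (0 : V → ℝ) ∉ K := by
    rintro ⟨b, hb, hb0⟩
    refine hnot ⟨_, (G.mem_Lap_iff).2 ⟨b, fun e => hb e (Set.mem_univ e), rfl⟩, fun v => ?_⟩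
    simpa [hL, c] using congrFun hb0 v
  have hKconv : Convex ℝ K := by
    simpa only [Set.image_image] using
      ((convex_pi fun e _ => G.convex_face e z).linear_image L).translate c
  have hKc : IsClosed K :=
    ((isCompact_univ_pi fun e => G.isCompact_face e z).image
      (continuous_const.add L.continuous_of_finiteDimensional)).isClosed
  obtain ⟨h, hh⟩ := exists_forall_dotProduct_neg hKconv hKc h0
  choose u hu hzu hhu using fun e => (G.mem e).exists_mem_eq_sup'_forall_le (G.mem_nonempty e) z h
  choose v hv hzv hhv using fun e => (G.mem e).exists_mem_eq_inf'_forall_le (G.mem_nonempty e) z h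
  have hslope := hh _ ⟨_, fun e _ => G.single_sub_mem_face (hu e) (hzu e) (hv e) (hzv e), rfl⟩
  simp only [hL, add_dotProduct, smul_dotProduct, sum_dotProduct, sub_dotProduct,
    single_dotProduct, one_mul, smul_eq_mul] at hslope
  rw [show c ⬝ᵥ h = ∑ v, (z v - z' v) * G.deg v * h v from rfl] at hslope
  have hdesc := G.eventually_energy_add_smul_le hlam z' z h hhu hhv
  obtain ⟨t, hdesc, hneg⟩ := ((hdesc.filter_mono (nhdsWithin_mono _ Set.Ioi_subset_Ici_self)).and
    (eventually_mul_add_sq_mul_neg (C := lam / 2 * ∑ e, G.w e * (h (u e) - h (v e)) ^ 2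
      + 1 / 2 * ∑ v, h v ^ 2 * G.deg v) hslope)).exists
  linarith [hmin (z + t • h)]

variable {G}

lemma eq_of_sum_sq_mul_deg_le_zero (hd : ∀ v, 0 < G.deg v) {a b : V → ℝ}
    (h : ∑ v, (a v - b v) ^ 2 * G.deg v ≤ 0) : a = b := by
  have hnn v (_ : v ∈ univ) : 0 ≤ (a v - b v) ^ 2 * G.deg v :=
    mul_nonneg (sq_nonneg _) (hd v).le
  funext v
  have hv := (sum_eq_zero_iff_of_nonneg hnn).1 (le_antisymm h (sum_nonneg hnn)) v (mem_univ v)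
  simpa [sub_eq_zero, (hd v).ne'] using hv

lemma Dinv_mul_deg (hd : ∀ v, 0 < G.deg v) (z : V → ℝ) : G.Dinv (fun v => z v * G.deg v) = z :=
  funext fun v => mul_div_cancel_right₀ (z v) (hd v).ne'

lemma mul_deg_Dinv (hd : ∀ v, 0 < G.deg v) (x : V → ℝ) : (fun v => G.Dinv x v * G.deg v) = x :=
  funext fun v => div_mul_cancel₀ (x v) (hd v).ne'

lemma exists_nLap_iff_solvesResolvent (hd : ∀ v, 0 < G.deg v) (lam : ℝ) (x' x : V → ℝ) :
    (∃ y ∈ G.nLap x, x - x' = -(lam • y)) ↔ G.SolvesResolvent lam (G.Dinv x') (G.Dinv x) := by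
  refine exists_congr fun y => and_congr_right fun _ => ?_
  rw [funext_iff]
  refine forall_congr' fun v => ?_
  have hx : G.Dinv x v * G.deg v = x v := congrFun (mul_deg_Dinv hd x) v
  have hx' : G.Dinv x' v * G.deg v = x' v := congrFun (mul_deg_Dinv hd x') v
  rw [sub_mul, hx, hx', Pi.sub_apply, Pi.neg_apply, Pi.smul_apply, smul_eq_mul]
  constructor <;> intro h <;> linarith

lemma half_sq_mul_deg_le_energy (hd : ∀ v, 0 < G.deg v) {lam : ℝ} (hlam : 0 ≤ lam)
    (z' z : V → ℝ) (v : V) :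
    1 / 2 * ((z v - z' v) ^ 2 * G.deg v) ≤ G.energy lam z' z := by
  have hv := single_le_sum (f := fun u => (z u - z' u) ^ 2 * G.deg u)
    (fun u _ => mul_nonneg (sq_nonneg _) (hd u).le) (mem_univ v)
  have := mul_nonneg (by linarith : 0 ≤ lam / 2) (G.edgeEnergy_nonneg z)
  unfold energy
  linarith

lemma exists_forall_energy_le (hd : ∀ v, 0 < G.deg v) {lam : ℝ} (hlam : 0 ≤ lam) (z' : V → ℝ) :
    ∃ z, ∀ z₂, G.energy lam z' z ≤ G.energy lam z' z₂ := by
  refine (G.continuous_energy lam z').exists_forall_le' z' ?_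
  rw [← coprodᵢ_cocompact]
  refine eventually_iSup.2 fun v => ?_
  have htend : Tendsto (fun r : ℝ => 1 / 2 * ((r - z' v) ^ 2 * G.deg v)) (cocompact ℝ) atTop := by
    have := (((tendsto_pow_atTop two_ne_zero).comp
      (tendsto_dist_right_cocompact_atTop (z' v))).atTop_mul_const (hd v)).const_mul_atTop
      (by norm_num : (0 : ℝ) < 1 / 2)
    simpa only [Function.comp_def, Real.dist_eq, sq_abs] using this
  exact ((htend.eventually_ge_atTop _).comap _).mono fun z hz =>
    hz.trans (half_sq_mul_deg_le_energy hd hlam z' z v)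

lemma solvesResolvent_iff (hd : ∀ v, 0 < G.deg v) {lam : ℝ} (hlam : 0 ≤ lam) (z' z : V → ℝ) :
    G.SolvesResolvent lam z' z ↔
      ∀ z₂, G.energy lam z' z ≤ G.energy lam z' z₂ ∧
        (G.energy lam z' z₂ = G.energy lam z' z → z₂ = z) := by
  refine ⟨fun hz z₂ => ?_,
    fun hmin => G.solvesResolvent_of_forall_energy_le hlam fun z₂ => (hmin z₂).1⟩
  have hgap := G.energy_add_le_of_solvesResolvent hlam hz z₂
  have hnn : 0 ≤ ∑ v, (z₂ v - z v) ^ 2 * G.deg v :=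
    sum_nonneg fun v _ => mul_nonneg (sq_nonneg _) (hd v).le
  exact ⟨by linarith, fun heq => eq_of_sum_sq_mul_deg_le_zero hd (by linarith)⟩

/-- resolvent characterization: `x − x' ∈ −λ𝓛_G(x)` iff `D⁻¹x` is the
unique minimizer of `F(z) = (λ/2)∑_e w(e) f_e(z)² + (1/2)∑_v (z(v) − (D⁻¹x')(v))² d(v)`;
in particular the resolvent equation has exactly one solution. -/
theorem resolvent_characterization {V : Type} [Fintype V] [DecidableEq V] (G : WHG V)
    (hd : ∀ v, 0 < G.deg v) (lam : ℝ) (hlam : 0 < lam) (x' : V → ℝ) :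
    let F : (V → ℝ) → ℝ := fun z =>
      lam / 2 * ∑ e : G.E, G.w e *
          ((G.mem e).sup' (G.mem_nonempty e) z - (G.mem e).inf' (G.mem_nonempty e) z) ^ 2
        + 1 / 2 * ∑ v, (z v - x' v / G.deg v) ^ 2 * G.deg v
    (∀ x : V → ℝ,
      (∃ y ∈ G.nLap x, x - x' = -(lam • y)) ↔
      (∀ z : V → ℝ, F (G.Dinv x) ≤ F z ∧ (F z = F (G.Dinv x) → z = G.Dinv x))) ∧
    (∃! x : V → ℝ, ∃ y ∈ G.nLap x, x - x' = -(lam • y)) := by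
  intro F
  have hsol x := exists_nLap_iff_solvesResolvent hd lam x' x
  have hmin z := solvesResolvent_iff hd hlam.le (G.Dinv x') z
  refine ⟨fun x => (hsol x).trans (hmin _), ?_⟩
  obtain ⟨z₀, hz₀⟩ := exists_forall_energy_le hd hlam.le (G.Dinv x')
  refine ⟨fun v => z₀ v * G.deg v, (hsol _).2 ?_, fun x hx => ?_⟩
  · rw [Dinv_mul_deg hd]
    exact G.solvesResolvent_of_forall_energy_le hlam.le hz₀
  · have hx₀ := (hmin _).1 ((hsol x).1 hx) z₀
    rw [← mul_deg_Dinv hd x, ← hx₀.2 (le_antisymm (hz₀ _) hx₀.1)]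

end WHG
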